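/- arXiv:2603.28531 — 2 statements merged into one kernel-verified Lean document; each statement's English description precedes it below -/
import Mathlib

section
/- Let c, s ∈ ℝ, k = 1 and Ω = −c, and let U, A : ℝ → ℝ be twice differentiable functions satisfying the profile system U'' − c·U + (1/2)·U² + s·A² = 0 and A'' + (−c + U)·A = 0 on ℝ. Then the function I(ξ) = A'(ξ)·U'(ξ) − c·A(ξ)·U(ξ) + (s/3)·A(ξ)³ + (1/2)·A(ξ)·U(ξ)² is constant on ℝ. -/
noncomputable def secondInvariant (c s : ℝ) (U U' A A' : ℝ → ℝ) (ξ : ℝ) : ℝ :=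
  A' ξ * U' ξ - c * A ξ * U ξ + (s / 3) * A ξ ^ 3 + (1 / 2) * A ξ * U ξ ^ 2

theorem hasDerivAt_secondInvariant {c s ξ u'' a'' : ℝ} {U U' A A' : ℝ → ℝ}
    (hU : HasDerivAt U (U' ξ) ξ) (hU' : HasDerivAt U' u'' ξ)
    (hA : HasDerivAt A (A' ξ) ξ) (hA' : HasDerivAt A' a'' ξ) :
    HasDerivAt (secondInvariant c s U U' A A')
      (a'' * U' ξ + A' ξ * u'' - c * (A' ξ * U ξ + A ξ * U' ξ) + s * A ξ ^ 2 * A' ξ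
        + (1 / 2) * (A' ξ * U ξ ^ 2 + 2 * A ξ * U ξ * U' ξ)) ξ := by
  have hderiv := (((hA'.mul hU').sub ((hA.mul hU).const_mul c)).add
    ((hA.pow 3).const_mul (s / 3))).add ((hA.mul (hU.pow 2)).const_mul (1 / 2))
  have hI : secondInvariant c s U U' A A' =
      fun x => A' x * U' x - c * (A x * U x) + s / 3 * A x ^ 3 + 1 / 2 * (A x * U x ^ 2) := by
    ext x
    simp only [secondInvariant]
    ring
  rw [hI]
  exact hderiv.congr_deriv (by simp only [Pi.pow_apply, Nat.cast_ofNat]; ring)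

/-- `I' = U' · (A'' + (U - c) A) + A' · (U'' - c U + U² / 2 + s A²)`. -/
theorem hasDerivAt_secondInvariant_eq_zero {c s ξ u'' a'' : ℝ} {U U' A A' : ℝ → ℝ}
    (hU : HasDerivAt U (U' ξ) ξ) (hU' : HasDerivAt U' u'' ξ)
    (hA : HasDerivAt A (A' ξ) ξ) (hA' : HasDerivAt A' a'' ξ)
    (hprofileU : u'' - c * U ξ + (1 / 2) * U ξ ^ 2 + s * A ξ ^ 2 = 0)
    (hprofileA : a'' + (-c + U ξ) * A ξ = 0) :
    HasDerivAt (secondInvariant c s U U' A A') 0 ξ :=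
  (hasDerivAt_secondInvariant hU hU' hA hA').congr_deriv
    (by linear_combination U' ξ * hprofileA + A' ξ * hprofileU)

/-- For `k = 1` and `Ω = −c`, the second invariant
`I = A'U' − cAU + (s/3)A³ + (1/2)AU²` is constant along solutions of the
profile system. -/
theorem second_invariant_constant_k_one (c s : ℝ)
    (U A : ℝ → ℝ)
    (hU : Differentiable ℝ U) (hU' : Differentiable ℝ (deriv U))
    (hA : Differentiable ℝ A) (hA' : Differentiable ℝ (deriv A))
    (heq1 : ∀ ξ : ℝ, deriv (deriv U) ξ - c * U ξ + (1 / 2) * U ξ ^ 2 + s * A ξ ^ 2 = 0)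
    (heq2 : ∀ ξ : ℝ, deriv (deriv A) ξ + (-c + U ξ) * A ξ = 0) :
    ∀ ξ₁ ξ₂ : ℝ,
      deriv A ξ₁ * deriv U ξ₁ - c * A ξ₁ * U ξ₁ + (s / 3) * A ξ₁ ^ 3
        + (1 / 2) * A ξ₁ * U ξ₁ ^ 2
      = deriv A ξ₂ * deriv U ξ₂ - c * A ξ₂ * U ξ₂ + (s / 3) * A ξ₂ ^ 3
        + (1 / 2) * A ξ₂ * U ξ₂ ^ 2 := by
  have hI (ξ : ℝ) : HasDerivAt (secondInvariant c s U (deriv U) A (deriv A)) 0 ξ :=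
    hasDerivAt_secondInvariant_eq_zero (hU ξ).hasDerivAt (hU' ξ).hasDerivAt
      (hA ξ).hasDerivAt (hA' ξ).hasDerivAt (heq1 ξ) (heq2 ξ)
  exact is_const_of_deriv_eq_zero (fun ξ => (hI ξ).differentiableAt) (fun ξ => (hI ξ).deriv)
end

section
/- The function W̃(y) = (1/12)·sech²(y)·(3·y·tanh y − 1) satisfies −W̃''(y) + 4·W̃(y) − 12·sech²(y)·W̃(y) = sech²(y)·tanh²(y) for all y ∈ ℝ, and moreover ∫_ℝ sech²(y)·tanh²(y)·W̃(y) dy = 1/60. -/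
/-!
With `t = tanh y` one has `sech² y = 1 - t²` and `t' = 1 - t²`, so every function of the form
`y p(t) + q(t)` with polynomials `p`, `q` differentiates to a function of the same form.
`W̃ = y (t - t³)/4 + (t² - 1)/12` is of this form, so the equation `L₁W̃ = g̃²` becomes a polynomial
identity in `y` and `t`. The integrand `g̃²W̃` is again of this form and has an explicit primitive
`F` of this form whose `y`-coefficient is divisible by `1 - t²`. Since `y sech² y → 0`, the limits of `F`
at `±∞` are `±1/120`, which gives the value `1/60` of the integral.
-/

open MeasureTheory Filter Topology Polynomial

namespace Real

lemma one_div_cosh_sq (y : ℝ) : (1 / cosh y) ^ 2 = 1 - tanh y ^ 2 := by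
  rw [tanh_eq_sinh_div_cosh, div_pow, div_pow, eq_sub_iff_add_eq, ← add_div, sinh_sq]
  field_simp
  ring

lemma hasDerivAt_tanh (y : ℝ) : HasDerivAt tanh (1 - tanh y ^ 2) y := by
  have h := (hasDerivAt_sinh y).div (hasDerivAt_cosh y) (cosh_pos y).ne'
  rw [show sinh / cosh = tanh from funext fun x => (tanh_eq_sinh_div_cosh x).symm] at h
  refine h.congr_deriv ?_
  rw [← one_div_cosh_sq, div_pow, one_pow, ← cosh_sq_sub_sinh_sq y]
  ring

@[fun_prop]
lemma continuous_tanh : Continuous tanh :=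
  continuous_iff_continuousAt.2 fun y => (hasDerivAt_tanh y).continuousAt

lemma abs_tanh_le_one (y : ℝ) : |tanh y| ≤ 1 :=
  abs_le.2 ⟨(neg_one_lt_tanh y).le, (tanh_lt_one y).le⟩

lemma tanh_eq_one_sub_two_div (y : ℝ) : tanh y = 1 - 2 / (exp (2 * y) + 1) := by
  have h : exp (2 * y) = exp y * exp y := by rw [two_mul, exp_add]
  rw [tanh_eq, exp_neg, h]
  field_simp
  ring

lemma tendsto_tanh_atTop : Tendsto tanh atTop (𝓝 1) := by
  have h : Tendsto (fun y : ℝ => exp (2 * y) + 1) atTop atTop :=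
    tendsto_atTop_add_const_right _ 1
      (tendsto_exp_atTop.comp (tendsto_id.const_mul_atTop two_pos))
  simpa [← tanh_eq_one_sub_two_div] using (h.const_div_atTop 2).const_sub 1

lemma tendsto_tanh_atBot : Tendsto tanh atBot (𝓝 (-1)) := by
  have h : Tendsto (fun y : ℝ => exp (2 * y) + 1) atBot (𝓝 1) := by
    simpa using (tendsto_exp_atBot.comp (tendsto_id.const_mul_atBot two_pos)).add_const 1
  convert (tendsto_const_nhds.div h one_ne_zero).const_sub 1 using 1
  · exact funext tanh_eq_one_sub_two_div
  · norm_num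

lemma one_add_sq_le_cosh_sq (y : ℝ) : 1 + y ^ 2 ≤ cosh y ^ 2 := by
  have h : |y| ≤ |sinh y| := by rw [abs_sinh]; exact self_le_sinh_iff.2 (abs_nonneg y)
  rw [cosh_sq]
  linarith [sq_le_sq.2 h]

lemma abs_mul_sech_sq_le (y : ℝ) : |y * (1 - tanh y ^ 2)| ≤ 2 / (1 + |y|) := by
  calc |y * (1 - tanh y ^ 2)| = |y| / cosh y ^ 2 := by
        rw [← one_div_cosh_sq, abs_mul, abs_of_nonneg (sq_nonneg (1 / cosh y))]
        ring
    _ ≤ |y| / (1 + y ^ 2) := by gcongr; exact one_add_sq_le_cosh_sq y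
    _ ≤ 2 / (1 + |y|) := by
        rw [div_le_div_iff₀ (by positivity) (by positivity)]
        nlinarith [sq_abs y, abs_nonneg y]

lemma tendsto_mul_sech_sq_cocompact :
    Tendsto (fun y => y * (1 - tanh y ^ 2)) (cocompact ℝ) (𝓝 0) := by
  have h : Tendsto (fun y : ℝ => 2 / (1 + |y|)) (cocompact ℝ) (𝓝 0) :=
    (tendsto_atTop_add_const_left _ 1 tendsto_norm_cocompact_atTop).const_div_atTop 2
  exact squeeze_zero_norm abs_mul_sech_sq_le h

lemma integrable_sech_sq : Integrable fun y => 1 - tanh y ^ 2 := by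
  refine integrable_inv_one_add_sq.mono' (by fun_prop) (ae_of_all _ fun y => ?_)
  rw [← one_div_cosh_sq, norm_of_nonneg (by positivity), div_pow, one_pow, one_div]
  exact inv_anti₀ (by positivity) (one_add_sq_le_cosh_sq y)

end Real

noncomputable def tanhForm (p q : ℝ[X]) (y : ℝ) : ℝ :=
  y * p.eval (Real.tanh y) + q.eval (Real.tanh y)

lemma hasDerivAt_tanhForm (p q : ℝ[X]) (y : ℝ) :
    HasDerivAt (tanhForm p q)
      (tanhForm (derivative p * (1 - X ^ 2)) (p + derivative q * (1 - X ^ 2)) y) y := by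
  have hp := (p.hasDerivAt _).comp y (Real.hasDerivAt_tanh y)
  have hq := (q.hasDerivAt _).comp y (Real.hasDerivAt_tanh y)
  refine (((hasDerivAt_id y).mul hp).add hq).congr_deriv ?_
  simp only [tanhForm, eval_add, eval_mul, eval_sub, eval_one, eval_pow, eval_X, id_eq,
    Function.comp_apply]
  ring

lemma deriv_tanhForm (p q : ℝ[X]) :
    deriv (tanhForm p q) =
      tanhForm (derivative p * (1 - X ^ 2)) (p + derivative q * (1 - X ^ 2)) :=
  funext fun y => (hasDerivAt_tanhForm p q y).deriv

lemma continuous_tanhForm (p q : ℝ[X]) : Continuous (tanhForm p q) :=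
  continuous_iff_continuousAt.2 fun y => (hasDerivAt_tanhForm p q y).continuousAt

lemma tendsto_tanhForm_atTop (r q : ℝ[X]) :
    Tendsto (tanhForm ((1 - X ^ 2) * r) q) atTop (𝓝 (q.eval 1)) := by
  have h := ((Real.tendsto_mul_sech_sq_cocompact.mono_left atTop_le_cocompact).mul
    ((r.continuous.tendsto 1).comp Real.tendsto_tanh_atTop)).add
    ((q.continuous.tendsto 1).comp Real.tendsto_tanh_atTop)
  rw [zero_mul, zero_add] at h
  refine h.congr fun y => ?_
  simp only [tanhForm, Function.comp_apply, eval_mul, eval_sub, eval_one, eval_pow, eval_X]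
  ring

lemma tendsto_tanhForm_atBot (r q : ℝ[X]) :
    Tendsto (tanhForm ((1 - X ^ 2) * r) q) atBot (𝓝 (q.eval (-1))) := by
  have h := ((Real.tendsto_mul_sech_sq_cocompact.mono_left atBot_le_cocompact).mul
    ((r.continuous.tendsto (-1)).comp Real.tendsto_tanh_atBot)).add
    ((q.continuous.tendsto (-1)).comp Real.tendsto_tanh_atBot)
  rw [zero_mul, zero_add] at h
  refine h.congr fun y => ?_
  simp only [tanhForm, Function.comp_apply, eval_mul, eval_sub, eval_one, eval_pow, eval_X]
  ring

noncomputable def wTilde : ℝ → ℝ :=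
  tanhForm (C (1 / 4) * (X - X ^ 3)) (C (1 / 12) * (X ^ 2 - 1))

lemma wTilde_apply (y : ℝ) :
    wTilde y = 1 / 12 * (1 / Real.cosh y) ^ 2 * (3 * y * Real.tanh y - 1) := by
  simp only [wTilde, tanhForm, eval_mul, eval_sub, eval_C, eval_pow, eval_X, eval_one,
    Real.one_div_cosh_sq]
  ring

lemma wTilde_ode (y : ℝ) :
    -deriv (deriv wTilde) y + 4 * wTilde y - 12 * (1 - Real.tanh y ^ 2) * wTilde y
      = (1 - Real.tanh y ^ 2) * Real.tanh y ^ 2 := by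
  simp only [wTilde, deriv_tanhForm, tanhForm, derivative_mul, derivative_add, derivative_sub,
    derivative_one, derivative_C, derivative_X, derivative_X_pow, derivative_zero, eval_mul,
    eval_add, eval_sub, eval_one, eval_X, eval_C, eval_pow, eval_zero]
  ring

lemma abs_wTilde_le (y : ℝ) : |wTilde y| ≤ 7 / 12 := by
  have ht := Real.abs_tanh_le_one y
  have hs : |1 - Real.tanh y ^ 2| ≤ 1 := by
    have := (sq_le_one_iff_abs_le_one (Real.tanh y)).2 ht
    exact abs_le.2 ⟨by linarith, by linarith [sq_nonneg (Real.tanh y)]⟩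
  have hys : |y * (1 - Real.tanh y ^ 2)| ≤ 2 :=
    (Real.abs_mul_sech_sq_le y).trans (div_le_self zero_le_two (by linarith [abs_nonneg y]))
  have hW : wTilde y = 1 / 4 * Real.tanh y * (y * (1 - Real.tanh y ^ 2))
      - 1 / 12 * (1 - Real.tanh y ^ 2) := by
    simp only [wTilde, tanhForm, eval_mul, eval_sub, eval_C, eval_pow, eval_X, eval_one]
    ring
  calc |wTilde y|
      ≤ 1 / 4 * |Real.tanh y| * |y * (1 - Real.tanh y ^ 2)| + 1 / 12 * |1 - Real.tanh y ^ 2| := by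
        rw [hW]
        refine (abs_sub _ _).trans_eq ?_
        simp only [abs_mul, abs_of_pos (by norm_num : (0 : ℝ) < 1 / 4),
          abs_of_pos (by norm_num : (0 : ℝ) < 1 / 12)]
    _ ≤ 1 / 4 * 1 * 2 + 1 / 12 * 1 := by gcongr
    _ = 7 / 12 := by norm_num

noncomputable def wTildeMomentPrimitive : ℝ → ℝ :=
  tanhForm ((1 - X ^ 2) * (C (-1 / 48) * (1 - X ^ 2) * (1 + 2 * X ^ 2)))
    (C (1 / 48) * (X - X ^ 3) + C (1 / 120) * X ^ 5)

lemma hasDerivAt_wTildeMomentPrimitive (y : ℝ) :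
    HasDerivAt wTildeMomentPrimitive
      ((1 - Real.tanh y ^ 2) * Real.tanh y ^ 2 * wTilde y) y := by
  refine (hasDerivAt_tanhForm _ _ y).congr_deriv ?_
  simp only [wTilde, tanhForm, derivative_mul, derivative_add, derivative_sub, derivative_one,
    derivative_C, derivative_X, derivative_X_pow, derivative_ofNat, eval_mul, eval_add, eval_sub,
    eval_one, eval_X, eval_C, eval_pow, eval_ofNat, eval_zero]
  ring

lemma integrable_sech_sq_mul_tanh_sq_mul_wTilde :
    Integrable fun y => (1 - Real.tanh y ^ 2) * Real.tanh y ^ 2 * wTilde y := by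
  have hbound (y : ℝ) : ‖Real.tanh y ^ 2 * wTilde y‖ ≤ 7 / 12 := by
    rw [Real.norm_eq_abs, abs_mul, abs_of_nonneg (sq_nonneg _)]
    have := (sq_le_one_iff_abs_le_one (Real.tanh y)).2 (Real.abs_tanh_le_one y)
    exact (mul_le_of_le_one_left (abs_nonneg _) this).trans (abs_wTilde_le y)
  have hcont : Continuous wTilde := continuous_tanhForm _ _
  refine (Real.integrable_sech_sq.bdd_mul (by fun_prop) (ae_of_all _ hbound)).congr
    (ae_of_all _ fun y => ?_)
  ring

lemma integral_sech_sq_mul_tanh_sq_mul_wTilde :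
    ∫ y, (1 - Real.tanh y ^ 2) * Real.tanh y ^ 2 * wTilde y = 1 / 60 := by
  rw [integral_of_hasDerivAt_of_tendsto hasDerivAt_wTildeMomentPrimitive
    integrable_sech_sq_mul_tanh_sq_mul_wTilde (tendsto_tanhForm_atBot _ _)
    (tendsto_tanhForm_atTop _ _)]
  norm_num

/-- `W̃(y) = (1/12)·sech²(y)·(3y·tanh y − 1)` solves
`−W̃'' + 4W̃ − 12 sech²(y)W̃ = sech²(y)tanh²(y)` and
`∫ sech²(y)tanh²(y)·W̃(y) dy = 1/60`. -/
theorem W_tilde_inhomogeneous_solution (W : ℝ → ℝ)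
    (hW : W = fun y => (1 / 12) * (1 / Real.cosh y) ^ 2 * (3 * y * Real.tanh y - 1)) :
    (∀ y : ℝ, -deriv (deriv W) y + 4 * W y - 12 * (1 / Real.cosh y) ^ 2 * W y
      = (1 / Real.cosh y) ^ 2 * Real.tanh y ^ 2) ∧
    (∫ y : ℝ, (1 / Real.cosh y) ^ 2 * Real.tanh y ^ 2 * W y) = 1 / 60 := by
  obtain rfl : W = wTilde := hW.trans (funext fun y => (wTilde_apply y).symm)
  simp only [Real.one_div_cosh_sq]
  exact ⟨wTilde_ode, integral_sech_sq_mul_tanh_sq_mul_wTilde⟩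
end
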